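/- For the linear interpolation path x_t = (1−t)x_0 + t ε with a fixed data point x_0 ∈ R^d, define the conditional distribution of the average velocity u_{0,t} = (x_t − x_0)/t given (x_0, t), namely p(u | x_0, t) = N(u; (α_t − 1)x_0/t, σ_t²/t² I) with α_t = 1−t, σ_t = t. Then the Fisher information metric of this exponential family with respect to the parameters (x_0, t) is the constant matrix diag(1, 0) (up to block structure), i.e. the metric is independent of (x_0, t). -/

import Mathlib

/-!
With `α_t = 1 - t` and `σ_t = t`, on the open set `t ≠ 0` the natural parameter is
`η(x₀, t) = (-x₀, -1/2)` and the expectation parameter is `μ(x₀, t) = (-x₀, ‖x₀‖² + d)`.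
Neither depends on `t` near `γ`, so `Dη` kills the `t`-direction and has zero second
component, and the pairing `⟪Dη u, Dμ v⟫` collapses to `⟪-u₁, -v₁⟫ = ⟪u₁, v₁⟫`.
-/

open Filter Topology

section LinearSchedule

variable {E : Type*} [NormedAddCommGroup E] [InnerProductSpace ℝ E]

theorem linearSchedule_natParam_eventuallyEq {γ : E × ℝ} (ht : γ.2 ≠ 0) :
    (fun p : E × ℝ => ((p.2 * ((1 - p.2) - 1) / p.2 ^ 2) • p.1, -(p.2 ^ 2) / (2 * p.2 ^ 2)))
      =ᶠ[𝓝 γ] fun p => (-p.1, -1 / 2) := by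
  filter_upwards [continuous_snd.continuousAt.eventually_ne ht] with p hp
  have hcoeff : p.2 * ((1 - p.2) - 1) / p.2 ^ 2 = -1 := by field_simp; ring
  have hconst : -(p.2 ^ 2) / (2 * p.2 ^ 2) = -1 / 2 := by field_simp
  rw [hcoeff, hconst, neg_one_smul]

theorem linearSchedule_meanParam_eventuallyEq (c : ℝ) {γ : E × ℝ} (ht : γ.2 ≠ 0) :
    (fun p : E × ℝ => ((((1 - p.2) - 1) / p.2) • p.1,
        ‖(((1 - p.2) - 1) / p.2) • p.1‖ ^ 2 + c * p.2 ^ 2 / p.2 ^ 2))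
      =ᶠ[𝓝 γ] fun p => (-p.1, ‖p.1‖ ^ 2 + c) := by
  filter_upwards [continuous_snd.continuousAt.eventually_ne ht] with p hp
  have hcoeff : ((1 - p.2) - 1) / p.2 = -1 := by field_simp; ring
  rw [hcoeff, neg_one_smul, norm_neg, mul_div_cancel_right₀ c (pow_ne_zero 2 hp)]

theorem hasFDerivAt_neg_fst_prodMk_const (c : ℝ) (γ : E × ℝ) :
    HasFDerivAt (fun p : E × ℝ => (-p.1, c)) ((-ContinuousLinearMap.fst ℝ E ℝ).prod 0) γ :=
  hasFDerivAt_fst.neg.prodMk (hasFDerivAt_const c γ)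

theorem hasFDerivAt_neg_fst_prodMk_norm_sq_add_const (c : ℝ) (γ : E × ℝ) :
    HasFDerivAt (fun p : E × ℝ => (-p.1, ‖p.1‖ ^ 2 + c))
      ((-ContinuousLinearMap.fst ℝ E ℝ).prod
        (2 • (innerSL ℝ γ.1).comp (ContinuousLinearMap.fst ℝ E ℝ))) γ :=
  hasFDerivAt_fst.neg.prodMk (hasFDerivAt_fst.norm_sq.add_const c)

end LinearSchedule

/-- Constancy of the Fisher information metric of the conditional
average-velocity family under the linear schedule `α_t = 1 − t`, `σ_t = t`.
The family `p(u | x₀, t) = N(u; (α_t − 1)x₀/t, σ_t²/t² I)` is an exponential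
family with natural parameter `η(x₀,t) = (t(α_t−1)/σ_t² · x₀, −t²/(2σ_t²))`
and expectation parameter `μ(x₀,t) = (m, ‖m‖² + d σ_t²/t²)` with
`m = (α_t−1)/t · x₀`; the Fisher metric `I = (∂η/∂γ)ᵀ(∂μ/∂γ)` is the constant
block matrix `diag(1, 0)`, independent of `(x₀, t)`. -/
theorem stmt19 (d : ℕ) (α σ : ℝ → ℝ)
    (hα : α = fun t => 1 - t) (hσ : σ = fun t => t)
    (η μf : EuclideanSpace ℝ (Fin d) × ℝ → EuclideanSpace ℝ (Fin d) × ℝ)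
    (hη : η = fun γ =>
      ((γ.2 * (α γ.2 - 1) / (σ γ.2) ^ 2) • γ.1,
        -(γ.2 ^ 2) / (2 * (σ γ.2) ^ 2)))
    (hμ : μf = fun γ =>
      (((α γ.2 - 1) / γ.2) • γ.1,
        ‖((α γ.2 - 1) / γ.2) • γ.1‖ ^ 2 + (d : ℝ) * (σ γ.2) ^ 2 / γ.2 ^ 2))
    (γ : EuclideanSpace ℝ (Fin d) × ℝ) (ht : γ.2 ≠ 0)
    (u v : EuclideanSpace ℝ (Fin d) × ℝ) :
    (inner ℝ ((fderiv ℝ η γ) u).1 ((fderiv ℝ μf γ) v).1 : ℝ)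
        + ((fderiv ℝ η γ) u).2 * ((fderiv ℝ μf γ) v).2
      = (inner ℝ u.1 v.1 : ℝ) := by
  subst hα hσ hη hμ
  rw [(linearSchedule_natParam_eventuallyEq ht).fderiv_eq,
    (linearSchedule_meanParam_eventuallyEq (d : ℝ) ht).fderiv_eq,
    (hasFDerivAt_neg_fst_prodMk_const _ γ).fderiv,
    (hasFDerivAt_neg_fst_prodMk_norm_sq_add_const _ γ).fderiv]
  simp
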